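/- Fix indices i, j with 1 ≤ i ≤ n, 1 ≤ j ≤ q. Assume W, A, S have nonnegative entries and w^t := W_{ij} > 0. Let F(w) = D(W', A, S) where W' agrees with W except that its (i,j) entry is replaced by w, and define G(w, w^t) = F(w^t) + F'(w^t)·(w − w^t) + ((W·A·S·Sᵀ·Aᵀ)_{ij} / w^t)·(w − w^t)², where F' denotes the derivative of F. Then G is an auxiliary function for F: G(w^t, w^t) = F(w^t) and G(w, w^t) ≥ F(w) for all w ∈ ℝ. -/

import Mathlib

open Matrix

/-- The GBR-NMF objective `D(W,A,S) = ‖X − W·A·S‖_F² = Tr((X − WAS)(X − WAS)ᵀ)`. -/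
noncomputable def objD {n p q : ℕ} (X : Matrix (Fin n) (Fin p) ℝ)
    (W : Matrix (Fin n) (Fin q) ℝ) (A : Matrix (Fin q) (Fin q) ℝ)
    (S : Matrix (Fin q) (Fin p) ℝ) : ℝ :=
  Matrix.trace ((X - W * A * S) * (X - W * A * S)ᵀ)

/-- The matrix agreeing with `M` except that its `(i,j)` entry is replaced by `w`. -/
def updEntry {m k : ℕ} (M : Matrix (Fin m) (Fin k) ℝ) (i : Fin m) (j : Fin k) (w : ℝ) :
    Matrix (Fin m) (Fin k) ℝ :=
  fun a b => if a = i ∧ b = j then w else M a b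

/-!
Along the line `w ↦ updEntry W i j w` the residual `X - W A S` moves affinely, to
`(X - W A S) - (w - wᵗ) • E` with `E = single i j 1 * (A S)`, so `F` is a quadratic whose
leading coefficient is `‖E‖² = ((A S)(A S)ᵀ)_{jj}`. A quadratic is majorized by its Taylor
polynomial at `wᵗ` with the leading coefficient enlarged, and with nonnegative entries
`wᵗ · ((A S)(A S)ᵀ)_{jj} ≤ (W (A S)(A S)ᵀ)_{ij}` because the left side is one term of the sum
defining the right side.
-/

namespace Matrix

variable {l m n R : Type*} [Fintype m]

theorem trace_mul_transpose_sub_smul [Fintype l] [CommRing R] (Y E : Matrix l m R) (s : R) :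
    trace ((Y - s • E) * (Y - s • E)ᵀ)
      = trace (Y * Yᵀ) - 2 * s * trace (Y * Eᵀ) + s ^ 2 * trace (E * Eᵀ) := by
  have hcross : trace (E * Yᵀ) = trace (Y * Eᵀ) := by
    rw [← trace_transpose, transpose_mul, transpose_transpose]
  simp only [transpose_sub, transpose_smul, Matrix.sub_mul, Matrix.mul_sub, Matrix.smul_mul,
    Matrix.mul_smul, trace_sub, trace_smul, hcross, smul_eq_mul]
  ring

theorem trace_single_one_mul_mul_transpose [Fintype l] [Fintype n] [DecidableEq l] [DecidableEq m]
    [CommSemiring R] (i : l) (j : m) (N : Matrix m n R) :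
    trace ((single i j (1 : R) * N) * (single i j (1 : R) * N)ᵀ) = (N * Nᵀ) j j := by
  rw [transpose_mul, transpose_single, ← Matrix.mul_assoc, Matrix.mul_assoc (single i j 1) N,
    single_mul_mul_single, trace_single_eq_same, one_mul, mul_one]

section Nonneg

variable [Semiring R] [PartialOrder R] [IsOrderedRing R] {M : Matrix l m R} {P : Matrix m n R}

theorem mul_apply_nonneg (hM : ∀ a b, 0 ≤ M a b) (hP : ∀ a b, 0 ≤ P a b) (a : l) (c : n) :
    0 ≤ (M * P) a c :=
  Finset.sum_nonneg fun k _ => mul_nonneg (hM a k) (hP k c)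

theorem apply_mul_apply_le_mul_apply (hM : ∀ a b, 0 ≤ M a b) (hP : ∀ a b, 0 ≤ P a b)
    (a : l) (b : m) (c : n) : M a b * P b c ≤ (M * P) a c :=
  Finset.single_le_sum (f := fun k => M a k * P k c) (fun k _ => mul_nonneg (hM a k) (hP k c))
    (Finset.mem_univ b)

end Nonneg

end Matrix

theorem le_add_deriv_mul_add_mul_sq_of_eq_quadratic {f : ℝ → ℝ} {t a b c K : ℝ}
    (hf : ∀ w, f w = a + b * (w - t) + c * (w - t) ^ 2) (hcK : c ≤ K) (w : ℝ) :
    f w ≤ f t + deriv f t * (w - t) + K * (w - t) ^ 2 := by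
  have hft : f t = a := by simpa using hf t
  have hderiv : deriv f t = b := by
    have hshift : HasDerivAt (fun w : ℝ => w - t) 1 t := (hasDerivAt_id t).sub_const t
    have hquad : HasDerivAt (fun w => a + b * (w - t) + c * (w - t) ^ 2) b t := by
      simpa using ((hshift.const_mul b).const_add a).fun_add ((hshift.fun_pow 2).const_mul c)
    rw [funext hf, hquad.deriv]
  rw [hf w, hft, hderiv]
  gcongr

theorem updEntry_eq_add_smul_single {m k : ℕ} (M : Matrix (Fin m) (Fin k) ℝ) (i : Fin m)
    (j : Fin k) (w : ℝ) : updEntry M i j w = M + (w - M i j) • single i j 1 := by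
  ext a b
  by_cases h : a = i ∧ b = j
  · obtain ⟨rfl, rfl⟩ := h
    simp [updEntry]
  · have h' : ¬(i = a ∧ j = b) := fun ⟨hi, hj⟩ => h ⟨hi.symm, hj.symm⟩
    simp [updEntry, single, h, h']

theorem objD_updEntry {n p q : ℕ} (X : Matrix (Fin n) (Fin p) ℝ) (W : Matrix (Fin n) (Fin q) ℝ)
    (A : Matrix (Fin q) (Fin q) ℝ) (S : Matrix (Fin q) (Fin p) ℝ) (i : Fin n) (j : Fin q)
    (w : ℝ) :
    objD X (updEntry W i j w) A S
      = objD X W A S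
        - 2 * (w - W i j) * trace ((X - W * A * S) * (single i j (1 : ℝ) * (A * S))ᵀ)
        + (w - W i j) ^ 2 * ((A * S) * (A * S)ᵀ) j j := by
  have hres : X - updEntry W i j w * A * S
      = (X - W * A * S) - (w - W i j) • (single i j (1 : ℝ) * (A * S)) := by
    rw [updEntry_eq_add_smul_single, Matrix.add_mul, Matrix.add_mul, Matrix.smul_mul,
      Matrix.smul_mul, Matrix.mul_assoc (single i j 1)]
    abel
  rw [objD, objD, hres, trace_mul_transpose_sub_smul, trace_single_one_mul_mul_transpose]

/-- (Lemma on `W`-updates.) With `wᵗ = W_{ij} > 0`, `F(w) = D(W', A, S)` (entry `(i,j)` of `W`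
replaced by `w`), the function
`G(w, wᵗ) = F(wᵗ) + F'(wᵗ)(w − wᵗ) + ((W·A·S·Sᵀ·Aᵀ)_{ij}/wᵗ)(w − wᵗ)²`
is an auxiliary function for `F`: `G(wᵗ, wᵗ) = F(wᵗ)` and `G(w, wᵗ) ≥ F(w)` for all `w`. -/
theorem aux_function_for_W_update
    (n p q : ℕ)
    (X : Matrix (Fin n) (Fin p) ℝ) (W : Matrix (Fin n) (Fin q) ℝ)
    (A : Matrix (Fin q) (Fin q) ℝ) (S : Matrix (Fin q) (Fin p) ℝ)
    (hW : ∀ i j, 0 ≤ W i j) (hA : ∀ i j, 0 ≤ A i j) (hS : ∀ i j, 0 ≤ S i j)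
    (i : Fin n) (j : Fin q) (hpos : 0 < W i j) :
    let F : ℝ → ℝ := fun w => objD X (updEntry W i j w) A S
    let G : ℝ → ℝ := fun w =>
      F (W i j) + deriv F (W i j) * (w - W i j)
        + ((W * A * S * Sᵀ * Aᵀ) i j / W i j) * (w - W i j) ^ 2
    G (W i j) = F (W i j) ∧ ∀ w : ℝ, G w ≥ F w := by
  intro F G
  set N := A * S with hN
  have hF_quad : ∀ w, F w = objD X W A S
      + -2 * trace ((X - W * A * S) * (single i j (1 : ℝ) * N)ᵀ) * (w - W i j)
      + (N * Nᵀ) j j * (w - W i j) ^ 2 := fun w => by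
    simp only [F, objD_updEntry]
    ring
  have hNN : ∀ a b, 0 ≤ (N * Nᵀ) a b :=
    mul_apply_nonneg (mul_apply_nonneg hA hS) fun a b => mul_apply_nonneg hA hS b a
  have hWNN : W * A * S * Sᵀ * Aᵀ = W * (N * Nᵀ) := by
    simp only [hN, transpose_mul, Matrix.mul_assoc]
  have hleading : (N * Nᵀ) j j ≤ (W * A * S * Sᵀ * Aᵀ) i j / W i j := by
    rw [le_div_iff₀ hpos, mul_comm, hWNN]
    exact apply_mul_apply_le_mul_apply hW hNN i j j
  exact ⟨by simp [G], le_add_deriv_mul_add_mul_sq_of_eq_quadratic hF_quad hleading⟩
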